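/- arXiv:1305.0433 — 2 statements merged into one kernel-verified Lean document; each statement's English description precedes it below -/
import Mathlib

section
/- Let C be a vertex cover of a graph G, let (T,𝒳) be a nice tree decomposition of G, and let (L^C,X^C,R^C) be a three-partition of C with L^C≠∅ such that at least one node of T has trace (L^C,X^C,R^C) on C. Then the set of nodes of T whose trace on C equals (L^C,X^C,R^C) induces a directed subpath of T: there are nodes imin and imax such that imax is an ancestor of imin (possibly imin=imax) and the nodes with this trace are exactly the nodes on the tree path from imin to imax. -/
open scoped Classical

noncomputable section

/-- Operations labelling the nodes of a nice tree decomposition.  For a `join`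
we record the trace of the bag on the vertex cover together with the traces of
the lower sets of the two children. -/
inductive TDOp (V : Type) where
  | introduce (u : V)
  | forget (u : V)
  | join (X L1 L2 : Set V)

/-- `i` is an ancestor of `j` (inclusively) with respect to the parent function `parent`. -/
def ancestorOf {ι : Type} (parent : ι → ι) (i j : ι) : Prop :=
  ∃ n : ℕ, parent^[n] j = i

/-- `k` lies on the unique tree path between `i` and `j` in the rooted tree given by `parent`. -/
def betweenNodes {ι : Type} (parent : ι → ι) (k i j : ι) : Prop :=
  (ancestorOf parent k i ∨ ancestorOf parent k j) ∧
    ∀ l, ancestorOf parent l i → ancestorOf parent l j → ancestorOf parent l k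

/-- A rooted tree decomposition of a graph `G`, encoded via a parent function on the
node set `ι`:  every node reaches the root by iterating `parent`; the bags cover the
vertices and the edges, and the set of bags containing a fixed vertex is connected
(it is closed under taking nodes on tree paths). -/
structure RootedTreeDecomp (V ι : Type) (G : SimpleGraph V) where
  root : ι
  parent : ι → ι
  parent_root : parent root = root
  reaches_root : ∀ i, ancestorOf parent root i
  bag : ι → Finset V
  bag_cover : ∀ v, ∃ i, v ∈ bag i
  bag_edge : ∀ u v, G.Adj u v → ∃ i, u ∈ bag i ∧ v ∈ bag i
  bag_conn : ∀ v i j k, v ∈ bag i → v ∈ bag j → betweenNodes parent k i j → v ∈ bag k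

namespace RootedTreeDecomp

variable {V ι : Type} {G : SimpleGraph V} (t : RootedTreeDecomp V ι G)

/-- `i` is an ancestor of `j` (inclusively). -/
def anc (i j : ι) : Prop := ancestorOf t.parent i j

/-- `V_i` : the union of the bags of the subtree rooted at `i`. -/
def subVerts (i : ι) : Set V := {v | ∃ j, t.anc i j ∧ v ∈ t.bag j}

/-- `L_i = V_i ∖ X_i`. -/
def Lset (i : ι) : Set V := t.subVerts i \ ↑(t.bag i)

/-- `R_i = V ∖ V_i`. -/
def Rset (i : ι) : Set V := Set.univ \ t.subVerts i

/-- The trace of node `i` on `C` is the three-partition `(L_i ∩ C, X_i ∩ C, R_i ∩ C)` of `C`. -/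
def HasTrace (C : Set V) (i : ι) (LC XC RC : Set V) : Prop :=
  LC = t.Lset i ∩ C ∧ XC = (↑(t.bag i) : Set V) ∩ C ∧ RC = t.Rset i ∩ C

/-- The children of a node. -/
def children (i : ι) : Set ι := {j | j ≠ t.root ∧ t.parent j = i}

/-- A leaf node: no children and a bag of size one. -/
def IsLeafNode (i : ι) : Prop := t.children i = ∅ ∧ ∃ u, t.bag i = {u}

/-- An introduce node. -/
def IsIntroduceNode [DecidableEq V] (i : ι) : Prop :=
  ∃ j u, t.children i = {j} ∧ u ∉ t.bag j ∧ t.bag i = insert u (t.bag j)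

/-- A forget node. -/
def IsForgetNode [DecidableEq V] (i : ι) : Prop :=
  ∃ j u, t.children i = {j} ∧ u ∈ t.bag j ∧ t.bag i = (t.bag j).erase u

/-- A join node. -/
def IsJoinNode (i : ι) : Prop :=
  ∃ j k, j ≠ k ∧ t.children i = ({j, k} : Set ι) ∧ t.bag j = t.bag i ∧ t.bag k = t.bag i

/-- A nice tree decomposition: every node is a leaf, introduce, forget or join node. -/
def IsNice [DecidableEq V] : Prop :=
  ∀ i, t.IsLeafNode i ∨ t.IsIntroduceNode i ∨ t.IsForgetNode i ∨ t.IsJoinNode i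

/-- A nice path decomposition: every node is a leaf, introduce or forget node. -/
def IsNicePath [DecidableEq V] : Prop :=
  ∀ i, t.IsLeafNode i ∨ t.IsIntroduceNode i ∨ t.IsForgetNode i

/-- The operation `op` is the operation `τ_i` performed at node `i`
(join operations are recorded through their traces on the vertex cover `C`). -/
def HasOp [DecidableEq V] (C : Set V) (i : ι) : TDOp V → Prop
  | TDOp.introduce u =>
      (t.children i = ∅ ∧ t.bag i = {u}) ∨
        ∃ j, t.children i = {j} ∧ u ∉ t.bag j ∧ t.bag i = insert u (t.bag j)
  | TDOp.forget u =>
      ∃ j, t.children i = {j} ∧ u ∈ t.bag j ∧ t.bag i = (t.bag j).erase u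
  | TDOp.join X L1 L2 =>
      ∃ j k, j ≠ k ∧ t.children i = ({j, k} : Set ι) ∧ t.bag j = t.bag i ∧ t.bag k = t.bag i ∧
        X = (↑(t.bag i) : Set V) ∩ C ∧ L1 = t.Lset j ∩ C ∧ L2 = t.Lset k ∩ C

/-- The width of a rooted tree decomposition: maximum bag size minus one. -/
def width [Fintype ι] : ℕ := (Finset.univ.sup fun i => (t.bag i).card) - 1

end RootedTreeDecomp

/-- A quintuple `(τ₋, L^C, X^C, R^C, τ₊)`. -/
structure TDQuint (V : Type) where
  tauL : TDOp V
  LC : Set V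
  XC : Set V
  RC : Set V
  tauR : TDOp V

/-- `C` is a vertex cover of `G`. -/
def IsVertexCover {V : Type} (G : SimpleGraph V) (C : Set V) : Prop :=
  ∀ u v, G.Adj u v → u ∈ C ∨ v ∈ C

/-- `X` separates `A` from `B` in the subgraph of `G` induced by `D`: there is no walk
between a vertex of `A` and a vertex of `B` all of whose vertices avoid `X` and stay in `D`. -/
def SeparatesIn {V : Type} (G : SimpleGraph V) (D X A B : Set V) : Prop :=
  ∀ a ∈ A, ∀ b ∈ B, ¬ ∃ p : G.Walk a b, ∀ v ∈ p.support, v ∈ D \ X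

/-- `(LC, XC, RC)` is a valid partition of `C`: it is the trace on `C` of some node of some
rooted tree decomposition of `G`. -/
def ValidPartition {V : Type} (G : SimpleGraph V) (C LC XC RC : Set V) : Prop :=
  ∃ (ι : Type) (t : RootedTreeDecomp V ι G) (i : ι), t.HasTrace C i LC XC RC

section

variable {V ι : Type} [DecidableEq V] {G : SimpleGraph V}

/-- The decomposition `t` respects the (non-degenerate) quintuple `Q`, with `imin` and `imax`
as lowest and highest nodes of the subpath of nodes whose trace on `C` is `(LC, XC, RC)`:
the operation at `imin` is `τ₋`, and the operation at the father of `imax` is `τ₊`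
(taken to be `forget w` on the root bag `{w}` when `imax` is the root). -/
def RespectsAtND (t : RootedTreeDecomp V ι G) (C : Set V) (Q : TDQuint V)
    (imin imax : ι) : Prop :=
  t.HasTrace C imin Q.LC Q.XC Q.RC ∧ t.HasTrace C imax Q.LC Q.XC Q.RC ∧ t.anc imax imin ∧
    (∀ i, t.HasTrace C i Q.LC Q.XC Q.RC → t.anc i imin ∧ t.anc imax i) ∧
    t.HasOp C imin Q.tauL ∧
    ((imax = t.root ∧ ∃ w, t.bag t.root = {w} ∧ Q.tauR = TDOp.forget w) ∨
      (imax ≠ t.root ∧ t.HasOp C (t.parent imax) Q.tauR))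

/-- The decomposition `t` respects the degenerate quintuple `Q` at node `i`: node `i` has
trace `(∅, XC, RC)` on `C` and its father performs the forget operation `τ₊`. -/
def RespectsAtDeg (t : RootedTreeDecomp V ι G) (C : Set V) (Q : TDQuint V) (i : ι) : Prop :=
  t.HasTrace C i Q.LC Q.XC Q.RC ∧
    ∃ u, Q.tauR = TDOp.forget u ∧ i ≠ t.root ∧ t.HasOp C (t.parent i) (TDOp.forget u)

/-- The decomposition `t` respects the quintuple `Q`, witnessed by the nodes `imin`, `imax`. -/
def RespectsAt (t : RootedTreeDecomp V ι G) (C : Set V) (Q : TDQuint V)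
    (imin imax : ι) : Prop :=
  (Q.LC ≠ ∅ ∧ RespectsAtND t C Q imin imax) ∨
    (Q.LC = ∅ ∧ imin = imax ∧ RespectsAtDeg t C Q imax)

/-- The decomposition `t` respects the quintuple `Q`. -/
def Respects (t : RootedTreeDecomp V ι G) (C : Set V) (Q : TDQuint V) : Prop :=
  ∃ imin imax, RespectsAt t C Q imin imax

end

/-- Valid quintuples (tree-decomposition version), including the degenerate ones. -/
def ValidQuintT {V : Type} [DecidableEq V] (G : SimpleGraph V) (C : Set V)
    (Q : TDQuint V) : Prop :=
  (Q.LC ≠ ∅ ∧ ∃ (ι : Type) (t : RootedTreeDecomp V ι G), t.IsNice ∧ Respects t C Q) ∨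
    (Q.LC = ∅ ∧ ValidPartition G C ∅ Q.XC Q.RC ∧
      ∃ u, u ∈ Q.XC ∧ G.neighborSet u ⊆ Q.XC ∧ Q.tauR = TDOp.forget u)

/-- Valid quintuples (path-decomposition version): `Q` is respected by some nice path
decomposition of `G`. -/
def ValidQuintP {V : Type} [DecidableEq V] (G : SimpleGraph V) (C : Set V)
    (Q : TDQuint V) : Prop :=
  ∃ (ι : Type) (t : RootedTreeDecomp V ι G), t.IsNicePath ∧
    ∃ imin imax, RespectsAtND t C Q imin imax

section

variable {V : Type} [DecidableEq V]

/-- `XTR^S(Q)`: vertices of `S = V ∖ C` having neighbours in both `L^C` and `R^C`. -/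
def XTRset (G : SimpleGraph V) (C : Set V) (Q : TDQuint V) : Set V :=
  {x | x ∉ C ∧ (G.neighborSet x ∩ Q.LC).Nonempty ∧ (G.neighborSet x ∩ Q.RC).Nonempty}

/-- `XL^S(Q)`. -/
def XLset (G : SimpleGraph V) (C : Set V) (Q : TDQuint V) : Set V :=
  match Q.tauL with
  | TDOp.introduce u =>
      {x | x ∉ C ∧ G.neighborSet x ⊆ Q.LC ∪ Q.XC ∧ u ∈ G.neighborSet x ∧
        (G.neighborSet x ∩ Q.LC).Nonempty}
  | TDOp.forget _ => ∅
  | TDOp.join _ L1 L2 =>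
      {x | x ∉ C ∧ (G.neighborSet x ∩ L1).Nonempty ∧ (G.neighborSet x ∩ L2).Nonempty ∧
        G.neighborSet x ∩ Q.RC = ∅}

/-- `XR^S(Q)`. -/
def XRset (G : SimpleGraph V) (C : Set V) (Q : TDQuint V) : Set V :=
  match Q.tauR with
  | TDOp.forget v =>
      {x | x ∉ C ∧ G.neighborSet x ⊆ Q.RC ∪ Q.XC ∧ v ∈ G.neighborSet x ∧
        (G.neighborSet x ∩ Q.RC).Nonempty}
  | _ => ∅

/-- `ε(Q)` (treewidth version): `1` if some vertex of `S` has neighbourhood exactly `X^C`. -/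
def epsT (G : SimpleGraph V) (C : Set V) (Q : TDQuint V) : ℕ :=
  if ∃ x, x ∉ C ∧ G.neighborSet x = Q.XC then 1 else 0

/-- The local treewidth of a quintuple. -/
def loctw (G : SimpleGraph V) (C : Set V) (Q : TDQuint V) : ℕ :=
  Q.XC.ncard +
    max (max ((XTRset G C Q).ncard + (XLset G C Q).ncard)
      ((XTRset G C Q).ncard + (XRset G C Q).ncard)) (epsT G C Q) - 1

/-- Fuelled version of the partial treewidth recursion. -/
def ptwAux (G : SimpleGraph V) (C : Set V) : ℕ → TDQuint V → ℕ
  | 0, Q => loctw G C Q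
  | m + 1, Q =>
    if Q.LC = ∅ then loctw G C Q
    else
      match Q.tauL with
      | TDOp.introduce u =>
          max (loctw G C Q)
            (sInf {n | ∃ τ,
              ValidQuintT G C ⟨τ, Q.LC, Q.XC \ {u}, Q.RC ∪ {u}, TDOp.introduce u⟩ ∧
              n = ptwAux G C m ⟨τ, Q.LC, Q.XC \ {u}, Q.RC ∪ {u}, TDOp.introduce u⟩})
      | TDOp.forget u =>
          max (loctw G C Q)
            (sInf {n | ∃ τ,
              ValidQuintT G C ⟨τ, Q.LC \ {u}, Q.XC ∪ {u}, Q.RC, TDOp.forget u⟩ ∧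
              n = ptwAux G C m ⟨τ, Q.LC \ {u}, Q.XC ∪ {u}, Q.RC, TDOp.forget u⟩})
      | TDOp.join _ L1 L2 =>
          max (loctw G C Q)
            (max
              (sInf {n | ∃ τ,
                ValidQuintT G C ⟨τ, L1, Q.XC, Q.RC ∪ L2, TDOp.join Q.XC L1 L2⟩ ∧
                n = ptwAux G C m ⟨τ, L1, Q.XC, Q.RC ∪ L2, TDOp.join Q.XC L1 L2⟩})
              (sInf {n | ∃ τ,
                ValidQuintT G C ⟨τ, L2, Q.XC, Q.RC ∪ L1, TDOp.join Q.XC L1 L2⟩ ∧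
                n = ptwAux G C m ⟨τ, L2, Q.XC, Q.RC ∪ L1, TDOp.join Q.XC L1 L2⟩}))

/-- The partial treewidth `ptw(Q)` of a quintuple (defined with sufficient fuel:
each recursive step strictly decreases `2·|L^C| + |X^C|`). -/
def ptw (G : SimpleGraph V) (C : Set V) (Q : TDQuint V) : ℕ :=
  ptwAux G C (2 * Q.LC.ncard + Q.XC.ncard) Q

/-- `X^C_-` : the bag trace just below `imin`. -/
def XCminus (Q : TDQuint V) : Set V :=
  match Q.tauL with
  | TDOp.introduce u => Q.XC \ {u}
  | TDOp.forget u => Q.XC ∪ {u}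
  | TDOp.join _ _ _ => Q.XC

/-- `X^C_+` : the bag trace just above `imax`. -/
def XCplus (Q : TDQuint V) : Set V :=
  match Q.tauR with
  | TDOp.introduce v => Q.XC ∪ {v}
  | TDOp.forget v => Q.XC \ {v}
  | TDOp.join _ _ _ => Q.XC

/-- `XF^S(Q)` (pathwidth version). -/
def XFPset (G : SimpleGraph V) (C : Set V) (Q : TDQuint V) : Set V :=
  {x | x ∉ C ∧ G.neighborSet x ⊆ Q.XC ∧
    (XCminus Q ⊂ Q.XC → ¬ G.neighborSet x ⊆ XCminus Q) ∧
    (XCplus Q ⊂ Q.XC → ¬ G.neighborSet x ⊆ XCplus Q)}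

/-- `ε(Q)` (pathwidth version). -/
def epsP (G : SimpleGraph V) (C : Set V) (Q : TDQuint V) : ℕ :=
  if (XFPset G C Q).Nonempty then 1 else 0

/-- The local pathwidth of a quintuple. -/
def locpw (G : SimpleGraph V) (C : Set V) (Q : TDQuint V) : ℕ :=
  Q.XC.ncard + (XTRset G C Q).ncard +
    max (max (XLset G C Q).ncard (XRset G C Q).ncard) (epsP G C Q) - 1

/-- Fuelled version of the partial pathwidth recursion. -/
def ppwAux (G : SimpleGraph V) (C : Set V) : ℕ → TDQuint V → ℕ
  | 0, Q => locpw G C Q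
  | m + 1, Q =>
    if ∃ u, Q.tauL = TDOp.introduce u ∧ Q.LC = ∅ ∧ Q.XC = {u} ∧ Q.RC = C \ {u} then
      locpw G C Q
    else
      match Q.tauL with
      | TDOp.introduce u =>
          max (locpw G C Q)
            (sInf {n | ∃ τ,
              ValidQuintP G C ⟨τ, Q.LC, Q.XC \ {u}, Q.RC ∪ {u}, TDOp.introduce u⟩ ∧
              n = ppwAux G C m ⟨τ, Q.LC, Q.XC \ {u}, Q.RC ∪ {u}, TDOp.introduce u⟩})
      | TDOp.forget u =>
          max (locpw G C Q)
            (sInf {n | ∃ τ,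
              ValidQuintP G C ⟨τ, Q.LC \ {u}, Q.XC ∪ {u}, Q.RC, TDOp.forget u⟩ ∧
              n = ppwAux G C m ⟨τ, Q.LC \ {u}, Q.XC ∪ {u}, Q.RC, TDOp.forget u⟩})
      | TDOp.join _ _ _ => locpw G C Q

/-- The partial pathwidth `ppw(Q)` of a quintuple. -/
def ppw (G : SimpleGraph V) (C : Set V) (Q : TDQuint V) : ℕ :=
  ppwAux G C (2 * Q.LC.ncard + Q.XC.ncard) Q

end

end

namespace RootedTreeDecomp

variable {V ι : Type} {G : SimpleGraph V} (t : RootedTreeDecomp V ι G)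

lemma anc_refl' (i : ι) : t.anc i i := ⟨0, rfl⟩

lemma anc_trans' {i j k : ι} (h1 : t.anc i j) (h2 : t.anc j k) : t.anc i k := by
  obtain ⟨n, hn⟩ := h1
  obtain ⟨m, hm⟩ := h2
  exact ⟨n + m, by rw [Function.iterate_add_apply, hm, hn]⟩

lemma anc_total' {i l j : ι} (h1 : t.anc i j) (h2 : t.anc l j) :
    t.anc i l ∨ t.anc l i := by
  obtain ⟨n, hn⟩ := h1
  obtain ⟨m, hm⟩ := h2
  rcases le_total m n with h | h
  · left
    exact ⟨n - m, by rw [← hm, ← Function.iterate_add_apply, Nat.sub_add_cancel h, hn]⟩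
  · right
    exact ⟨m - n, by rw [← hn, ← Function.iterate_add_apply, Nat.sub_add_cancel h, hm]⟩

lemma anc_antisymm' {i j : ι} (h1 : t.anc i j) (h2 : t.anc j i) : i = j := by
  obtain ⟨n, hn⟩ := h1
  obtain ⟨m, hm⟩ := h2
  obtain ⟨k, hk⟩ := t.reaches_root j
  rcases Nat.eq_zero_or_pos (m + n) with hmn | hmn
  · have : m = 0 := by omega
    subst this
    simpa using hm
  · have hper : ∀ a : ℕ, t.parent^[a * (m + n)] j = j := by
      intro a
      induction a with
      | zero => simp
      | succ b ih =>
        rw [Nat.succ_mul, Function.iterate_add_apply, Function.iterate_add_apply, hn, hm, ih]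
    have hroot : j = t.root := by
      have hge : k ≤ k * (m + n) := Nat.le_mul_of_pos_right k hmn
      calc j = t.parent^[k * (m + n)] j := (hper k).symm
        _ = t.parent^[k * (m + n) - k + k] j := by rw [Nat.sub_add_cancel hge]
        _ = t.parent^[k * (m + n) - k] (t.parent^[k] j) := Function.iterate_add_apply _ _ _ _
        _ = t.root := by rw [hk, Function.iterate_fixed t.parent_root]
    subst hroot
    rw [← hn, Function.iterate_fixed t.parent_root]

lemma subVerts_mono' {i j : ι} (h : t.anc i j) : t.subVerts j ⊆ t.subVerts i := by
  rintro v ⟨m, hm, hv⟩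
  exact ⟨m, t.anc_trans' h hm, hv⟩

end RootedTreeDecomp

theorem trace_nodes_form_subpath {V ι : Type} [Fintype V] [DecidableEq V]
    {G : SimpleGraph V} (C : Set V) (hC : IsVertexCover G C)
    (t : RootedTreeDecomp V ι G) (ht : t.IsNice)
    (LC XC RC : Set V) (hL : LC ≠ ∅)
    (hex : ∃ i, t.HasTrace C i LC XC RC) :
    ∃ imin imax, t.anc imax imin ∧
      ∀ i, t.HasTrace C i LC XC RC ↔ (t.anc i imin ∧ t.anc imax i) := by
  classical
  obtain ⟨istar, histar⟩ := hex
  obtain ⟨v, hv⟩ := Set.nonempty_iff_ne_empty.mpr hL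
  obtain ⟨hLC1, hXC1, hRC1⟩ := histar
  have hvL : v ∈ t.Lset istar ∩ C := hLC1 ▸ hv
  obtain ⟨⟨⟨mstar, hms_anc, hms_bag⟩, hvnb⟩, hvC⟩ := hvL
  -- every node with the trace is an ancestor of mstar
  have keyB : ∀ i, t.HasTrace C i LC XC RC → t.anc i mstar := by
    intro i hi
    obtain ⟨hLi, hXi, hRi⟩ := hi
    have hvLi : v ∈ t.Lset i ∩ C := hLi ▸ hv
    obtain ⟨⟨⟨mi, hmi_anc, hmi_bag⟩, hvnbi⟩, -⟩ := hvLi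
    by_contra hno
    refine hvnbi ?_
    have : v ∈ t.bag i := by
      apply t.bag_conn v mstar mi i hms_bag hmi_bag
      refine ⟨Or.inr hmi_anc, fun l hl1 hl2 => ?_⟩
      rcases t.anc_total' hmi_anc hl2 with h | h
      · exact absurd (t.anc_trans' h hl1) hno
      · exact h
    exact this
  obtain ⟨d, hd⟩ := t.reaches_root mstar
  have rep : ∀ i, t.HasTrace C i LC XC RC → ∃ n ≤ d, t.parent^[n] mstar = i := by
    intro i hi
    obtain ⟨n, hn⟩ := keyB i hi
    rcases le_or_gt n d with h | h
    · exact ⟨n, h, hn⟩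
    · refine ⟨d, le_refl d, ?_⟩
      have hst : t.parent^[n] mstar = t.root := by
        have hsplit : n = (n - d) + d := (Nat.sub_add_cancel h.le).symm
        rw [hsplit, Function.iterate_add_apply, hd, Function.iterate_fixed t.parent_root]
      rw [hd, ← hn, hst]
  have step : ∀ {a b : ℕ}, a ≤ b → t.anc (t.parent^[b] mstar) (t.parent^[a] mstar) := by
    intro a b hab
    exact ⟨b - a, by rw [← Function.iterate_add_apply, Nat.sub_add_cancel hab]⟩
  set F : Finset ℕ := (Finset.range (d + 1)).filter
    (fun n => t.HasTrace C (t.parent^[n] mstar) LC XC RC) with hF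
  have hFne : F.Nonempty := by
    obtain ⟨n, hn, hrep⟩ := rep istar ⟨hLC1, hXC1, hRC1⟩
    exact ⟨n, Finset.mem_filter.mpr ⟨Finset.mem_range.mpr (by omega),
      by rw [hrep]; exact ⟨hLC1, hXC1, hRC1⟩⟩⟩
  set nmin := F.min' hFne with hnmin
  set nmax := F.max' hFne with hnmax
  set imin := t.parent^[nmin] mstar with himin
  set imax := t.parent^[nmax] mstar with himax
  have hminS : t.HasTrace C imin LC XC RC := (Finset.mem_filter.mp (F.min'_mem hFne)).2
  have hmaxS : t.HasTrace C imax LC XC RC := (Finset.mem_filter.mp (F.max'_mem hFne)).2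
  obtain ⟨hLmin, hXmin, hRmin⟩ := hminS
  obtain ⟨hLmax, hXmax, hRmax⟩ := hmaxS
  -- subVerts ∩ C determined by trace
  have subC : ∀ k : ι, LC = t.Lset k ∩ C → XC = (↑(t.bag k) : Set V) ∩ C →
      t.subVerts k ∩ C = LC ∪ XC := by
    intro k hLk hXk
    rw [hLk, hXk]
    ext x
    simp only [RootedTreeDecomp.Lset, Set.mem_inter_iff, Set.mem_union, Set.mem_diff]
    constructor
    · rintro ⟨hx, hc⟩
      by_cases hb : x ∈ (↑(t.bag k) : Set V)
      · exact Or.inr ⟨hb, hc⟩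
      · exact Or.inl ⟨⟨hx, hb⟩, hc⟩
    · rintro (⟨⟨hx, -⟩, hc⟩ | ⟨hb, hc⟩)
      · exact ⟨hx, hc⟩
      · exact ⟨⟨k, t.anc_refl' k, hb⟩, hc⟩
  refine ⟨imin, imax, step (F.min'_le nmax (F.max'_mem hFne)), fun i => ⟨?_, ?_⟩⟩
  · -- forward
    intro hi
    obtain ⟨n, hnd, hrep⟩ := rep i hi
    have hnF : n ∈ F := Finset.mem_filter.mpr
      ⟨Finset.mem_range.mpr (by omega), by rw [hrep]; exact hi⟩
    constructor
    · rw [← hrep]; exact step (F.min'_le n hnF)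
    · rw [← hrep]; exact step (F.le_max' n hnF)
  · -- backward
    rintro ⟨h1, h2⟩
    have hsub1 : t.subVerts imin ⊆ t.subVerts i := t.subVerts_mono' h1
    have hsub2 : t.subVerts i ⊆ t.subVerts imax := t.subVerts_mono' h2
    have hCmin : t.subVerts imin ∩ C = LC ∪ XC := subC imin hLmin hXmin
    have hCmax : t.subVerts imax ∩ C = LC ∪ XC := subC imax hLmax hXmax
    have hCi : t.subVerts i ∩ C = LC ∪ XC := by
      apply Set.Subset.antisymm
      · rw [← hCmax]; exact Set.inter_subset_inter_left C hsub2
      · rw [← hCmin]; exact Set.inter_subset_inter_left C hsub1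
    -- XC ⊆ bag i
    have hXCbag : XC ⊆ (↑(t.bag i) : Set V) := by
      intro x hx
      have hx1 : x ∈ t.bag imin := (hXmin ▸ hx).1
      have hx2 : x ∈ t.bag imax := (hXmax ▸ hx).1
      apply t.bag_conn x imin imax i hx1 hx2
      refine ⟨Or.inl h1, fun l hl1 hl2 => ?_⟩
      rcases t.anc_total' h1 hl1 with h | h
      · have : i = imax := t.anc_antisymm' (t.anc_trans' h hl2) h2
        rw [this]; exact hl2
      · exact h
    -- bag i ∩ C ⊆ XC
    have hbagXC : (↑(t.bag i) : Set V) ∩ C ⊆ XC := by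
      rintro x ⟨hxb, hxc⟩
      have hxsub : x ∈ LC ∪ XC := by
        rw [← hCi]; exact ⟨⟨i, t.anc_refl' i, hxb⟩, hxc⟩
      rcases hxsub with hxL | hxX
      · exfalso
        have hxLmin : x ∈ t.Lset imin ∩ C := hLmin ▸ hxL
        obtain ⟨⟨⟨m', hm'anc, hm'bag⟩, hxnb⟩, -⟩ := hxLmin
        refine hxnb ?_
        have : x ∈ t.bag imin := by
          apply t.bag_conn x i m' imin hxb hm'bag
          exact ⟨Or.inr hm'anc, fun l hl1 _ => t.anc_trans' hl1 h1⟩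
        exact this
      · exact hxX
    have hXCi : XC = (↑(t.bag i) : Set V) ∩ C := by
      apply Set.Subset.antisymm
      · intro x hx
        have hxc : x ∈ C := (hXmin ▸ hx).2
        exact ⟨hXCbag hx, hxc⟩
      · exact hbagXC
    have hLCXC : ∀ x, x ∈ LC → x ∈ XC → False := by
      intro x hxL hxX
      exact (hLmin ▸ hxL).1.2 (hXmin ▸ hxX).1
    refine ⟨?_, hXCi, ?_⟩
    · -- LC = Lset i ∩ C
      ext x
      constructor
      · intro hxL
        have hxmin : x ∈ t.Lset imin ∩ C := hLmin ▸ hxL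
        obtain ⟨⟨hxsub, hxnb⟩, hxc⟩ := hxmin
        refine ⟨⟨hsub1 hxsub, ?_⟩, hxc⟩
        intro hxb
        exact hLCXC x hxL (hbagXC ⟨hxb, hxc⟩)
      · rintro ⟨⟨hxsub, hxnb⟩, hxc⟩
        have : x ∈ LC ∪ XC := by rw [← hCi]; exact ⟨hxsub, hxc⟩
        rcases this with h | h
        · exact h
        · exact absurd (hXCbag h) hxnb
    · -- RC = Rset i ∩ C
      ext x
      have hmem : x ∈ t.Rset imin ∩ C ↔ x ∈ t.Rset i ∩ C := by
        simp only [RootedTreeDecomp.Rset, Set.mem_inter_iff, Set.mem_diff, Set.mem_univ,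
          true_and]
        constructor
        · rintro ⟨hns, hc⟩
          refine ⟨fun hs => hns ?_, hc⟩
          have : x ∈ LC ∪ XC := by rw [← hCi]; exact ⟨hs, hc⟩
          have : x ∈ t.subVerts imin ∩ C := by rw [hCmin]; exact this
          exact this.1
        · rintro ⟨hns, hc⟩
          refine ⟨fun hs => hns ?_, hc⟩
          have : x ∈ LC ∪ XC := by rw [← hCmin]; exact ⟨hs, hc⟩
          have : x ∈ t.subVerts i ∩ C := by rw [hCi]; exact this
          exact this.1
      rw [hRmin]
      exact hmem
end

section
/- Let C be a vertex cover of a graph G=(V,E). Suppose (L^C,X^C,R^C) is a valid partition of C, τ− is either introduce(u) for some u∈X^C with N(u)∩L^C=∅ or forget(u) for some u∈L^C, and τ+ is either introduce(v) for some v∈R^C or forget(v) for some v∈X^C with N(v)∩R^C=∅. Then (τ−,L^C,X^C,R^C,τ+) is a valid quintuple, i.e., it is respected by some nice path decomposition of G. -/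
open scoped Classical

/-!
A nice path decomposition is a sequence of introduce and forget events, a vertex living in the
bags between its two events. Introduce every vertex outside `R^C`, forget the vertices of `L^C`,
perform `τ₋`, perform `τ₊`, and introduce the rest of `R^C`, where `τ₋` and `τ₊` are taken out
of their blocks and moved to the two middle positions. The node of `τ₋` then has trace
`(L^C, X^C, R^C)`. Every edge is covered because no edge joins `L^C` to `R^C` (the partition is
the trace of a tree decomposition) and because the neighbourhood conditions on `τ₋` and `τ₊` are
exactly what moving these two events requires. As `τ₋` and `τ₊` act on vertices of `C` that
change their side of the trace, no other node has this trace.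
-/

lemma List.idxOf_lt_idxOf_of_isPrefix {α : Type*} [BEq α] [LawfulBEq α] {l₁ l : List α}
    (hl : l₁ <+: l) {a b : α} (ha : a ∈ l₁) (hb : b ∉ l₁) : l.idxOf a < l.idxOf b := by
  have ha' := (hl.mem_iff_idxOf_lt_length a).1 ha
  have hb' := (hl.mem_iff_idxOf_lt_length b).not.1 hb
  omega

lemma List.idxOf_lt_idxOf_of_notMem {α : Type*} [BEq α] [LawfulBEq α] {l : List α}
    {a b : α} (ha : a ∈ l) (hb : b ∉ l) : l.idxOf a < l.idxOf b := by
  rw [List.idxOf_of_notMem hb]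
  exact List.idxOf_lt_length_of_mem ha

lemma List.Nodup.idxOf_eq_iff {α : Type*} [BEq α] [LawfulBEq α] {l : List α} (hl : l.Nodup)
    {i : ℕ} (hi : i < l.length) {a : α} : l.idxOf a = i ↔ l[i] = a := by
  constructor
  · rintro rfl
    exact List.getElem_idxOf hi
  · rintro rfl
    exact hl.idxOf_getElem i hi

lemma ancestorOf_trans {ι : Type} {p : ι → ι} {i j k : ι}
    (hij : ancestorOf p i j) (hjk : ancestorOf p j k) : ancestorOf p i k := by
  obtain ⟨a, rfl⟩ := hij
  obtain ⟨b, rfl⟩ := hjk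
  exact ⟨a + b, Function.iterate_add_apply p a b k⟩

lemma ancestorOf_total {ι : Type} {p : ι → ι} {i j k : ι}
    (hi : ancestorOf p i k) (hj : ancestorOf p j k) : ancestorOf p i j ∨ ancestorOf p j i := by
  obtain ⟨a, rfl⟩ := hi
  obtain ⟨b, rfl⟩ := hj
  rcases le_total a b with h | h
  · right
    exact ⟨b - a, by rw [← Function.iterate_add_apply, Nat.sub_add_cancel h]⟩
  · left
    exact ⟨a - b, by rw [← Function.iterate_add_apply, Nat.sub_add_cancel h]⟩

def pathParent (n : ℕ) (i : Fin (n + 1)) : Fin (n + 1) := ⟨min (i + 1) n, by omega⟩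

lemma pathParent_iterate_val (n m : ℕ) (i : Fin (n + 1)) :
    ((pathParent n)^[m] i : ℕ) = min (i + m) n := by
  induction m with
  | zero => simp; omega
  | succ m ih =>
    rw [Function.iterate_succ_apply']
    change min (_ + 1) n = _
    omega

lemma ancestorOf_pathParent_iff {n : ℕ} {i j : Fin (n + 1)} :
    ancestorOf (pathParent n) i j ↔ (j : ℕ) ≤ i := by
  refine ⟨fun ⟨m, hm⟩ => ?_, fun h => ⟨i - j, Fin.ext ?_⟩⟩
  · have := pathParent_iterate_val n m j
    rw [hm] at this
    omega
  · rw [pathParent_iterate_val]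
    omega

lemma betweenNodes_pathParent_iff {n : ℕ} {k i j : Fin (n + 1)} :
    betweenNodes (pathParent n) k i j ↔ min (i : ℕ) j ≤ k ∧ (k : ℕ) ≤ max (i : ℕ) j := by
  simp only [betweenNodes, ancestorOf_pathParent_iff]
  refine ⟨fun ⟨h, hmax⟩ => ⟨by omega, ?_⟩, fun h => ⟨by omega, fun l hi hj => by omega⟩⟩
  simpa using hmax ⟨max (i : ℕ) j, by omega⟩ (by simp) (by simp)

namespace RootedTreeDecomp

variable {V ι : Type} {G : SimpleGraph V} (t : RootedTreeDecomp V ι G)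

lemma bag_subset_subVerts (i : ι) : ↑(t.bag i) ⊆ t.subVerts i :=
  fun _ hv => ⟨i, ⟨0, rfl⟩, hv⟩

lemma not_adj_of_mem_Lset_of_mem_Rset {i : ι} {l r : V} (hl : l ∈ t.Lset i)
    (hr : r ∈ t.Rset i) : ¬ G.Adj l r := by
  intro hadj
  obtain ⟨⟨j', hij', hlj'⟩, hli⟩ := hl
  obtain ⟨j, hlj, hrj⟩ := t.bag_edge l r hadj
  by_cases hij : t.anc i j
  · exact hr.2 ⟨j, hij, hrj⟩
  -- `i` lies on the path from `j` to `j'`, so the subtree property puts `l` into the bag of `i`.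
  refine hli (t.bag_conn l j j' i hlj hlj' ⟨Or.inr hij', fun m hmj hmj' => ?_⟩)
  exact (ancestorOf_total hmj' hij').resolve_right fun him => hij (ancestorOf_trans him hmj)

lemma isNicePath_of_hasOp [DecidableEq V] (C : Set V)
    (h : ∀ i, ∃ u, t.HasOp C i (.introduce u) ∨ t.HasOp C i (.forget u)) : t.IsNicePath := by
  intro i
  obtain ⟨u, (⟨hc, hb⟩ | ⟨j, hc, hu, hb⟩) | ⟨j, hc, hu, hb⟩⟩ := h i
  · exact Or.inl ⟨hc, u, hb⟩
  · exact Or.inr (Or.inl ⟨j, u, hc, hu, hb⟩)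
  · exact Or.inr (Or.inr ⟨j, u, hc, hu, hb⟩)

end RootedTreeDecomp

structure IsSeparatedPartition {V : Type} (G : SimpleGraph V) (C LC XC RC : Set V) : Prop where
  left_subset : LC ⊆ C
  right_subset : RC ⊆ C
  notMem_right_of_mem_left : ∀ v ∈ LC, v ∉ RC
  mem_mid_iff : ∀ v, v ∈ XC ↔ v ∈ C ∧ v ∉ LC ∧ v ∉ RC
  not_adj : ∀ l ∈ LC, ∀ r ∈ RC, ¬ G.Adj l r

lemma ValidPartition.isSeparatedPartition {V : Type} {G : SimpleGraph V} {C LC XC RC : Set V}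
    (h : ValidPartition G C LC XC RC) : IsSeparatedPartition G C LC XC RC := by
  obtain ⟨ι, t, i, rfl, rfl, rfl⟩ := h
  have hbag := t.bag_subset_subVerts i
  refine ⟨Set.inter_subset_right, Set.inter_subset_right, fun v hl hr => hr.1.2 hl.1.1,
    fun v => ?_, fun l hl r hr => t.not_adj_of_mem_Lset_of_mem_Rset hl.1 hr.1⟩
  simp only [RootedTreeDecomp.Lset, RootedTreeDecomp.Rset, Set.mem_inter_iff, Set.mem_sdiff,
    Set.mem_univ, true_and]
  constructor
  · rintro ⟨hv, hc⟩
    exact ⟨hc, fun h => h.1.2 hv, fun h => h.1 (hbag hv)⟩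
  · rintro ⟨hc, hl, hr⟩
    refine ⟨?_, hc⟩
    by_contra hv
    exact hr ⟨fun hs => hl ⟨⟨hs, hv⟩, hc⟩, hc⟩

/-- Node `i` of the path performs `E[i]`; a vertex `v` lies in the bags from the position of
`introduce v` up to, but excluding, the position of `forget v`, which is `E.length` when `v` is
never forgotten. -/
structure IsEventSeq {V : Type} (G : SimpleGraph V) (E : List (TDOp V)) : Prop where
  nodup : E.Nodup
  exists_vertex : ∀ e ∈ E, ∃ v, e = .introduce v ∨ e = .forget v
  introduce_mem : ∀ v, .introduce v ∈ E
  introduce_lt_forget : ∀ v, E.idxOf (.introduce v) < E.idxOf (.forget v)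
  introduce_lt_forget_of_adj : ∀ a b, G.Adj a b → E.idxOf (.introduce a) < E.idxOf (.forget b)

namespace IsEventSeq

variable {V : Type} {G : SimpleGraph V} {E : List (TDOp V)} {n : ℕ}
  (hE : IsEventSeq G E) (hn : E.length = n + 1)
include hE hn

lemma idxOf_introduce_lt (v : V) : E.idxOf (.introduce v) < n + 1 :=
  hn ▸ List.idxOf_lt_length_of_mem (hE.introduce_mem v)

variable [Fintype V]

noncomputable def toDecomp : RootedTreeDecomp V (Fin (n + 1)) G where
  root := Fin.last n
  parent := pathParent n
  parent_root := Fin.ext (by simp [pathParent])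
  reaches_root i := ancestorOf_pathParent_iff.2 (by simp; omega)
  bag i := Finset.univ.filter fun v => E.idxOf (.introduce v) ≤ i ∧ i < E.idxOf (.forget v)
  bag_cover v := ⟨⟨_, hE.idxOf_introduce_lt hn v⟩, by simp [hE.introduce_lt_forget v]⟩
  bag_edge a b hab := by
    have := hE.introduce_lt_forget_of_adj a b hab
    have := hE.introduce_lt_forget_of_adj b a hab.symm
    have := hE.introduce_lt_forget a
    have := hE.introduce_lt_forget b
    have := hE.idxOf_introduce_lt hn a
    have := hE.idxOf_introduce_lt hn b
    exact ⟨⟨max (E.idxOf (.introduce a)) (E.idxOf (.introduce b)), by omega⟩, by simp; omega,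
      by simp; omega⟩
  bag_conn v i j k hi hj hk := by
    rw [betweenNodes_pathParent_iff] at hk
    simp only [Finset.mem_filter, Finset.mem_univ, true_and] at hi hj ⊢
    omega

lemma mem_bag_iff {i : Fin (n + 1)} {v : V} :
    v ∈ (hE.toDecomp hn).bag i ↔ E.idxOf (.introduce v) ≤ i ∧ i < E.idxOf (.forget v) := by
  simp [toDecomp]

lemma anc_iff {i j : Fin (n + 1)} : (hE.toDecomp hn).anc i j ↔ (j : ℕ) ≤ i :=
  ancestorOf_pathParent_iff

lemma subVerts_eq (i : Fin (n + 1)) :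
    (hE.toDecomp hn).subVerts i = {v | E.idxOf (.introduce v) ≤ i} := by
  ext v
  simp only [RootedTreeDecomp.subVerts, anc_iff, Set.mem_ofPred_eq, mem_bag_iff]
  constructor
  · rintro ⟨j, hij, hj, -⟩
    omega
  · intro hv
    exact ⟨⟨_, hE.idxOf_introduce_lt hn v⟩, hv, le_rfl, hE.introduce_lt_forget v⟩

lemma Lset_eq (i : Fin (n + 1)) :
    (hE.toDecomp hn).Lset i = {v | E.idxOf (.forget v) ≤ i} := by
  ext v
  have := hE.introduce_lt_forget v
  simp only [RootedTreeDecomp.Lset, subVerts_eq, Set.mem_sdiff, Finset.mem_coe, mem_bag_iff,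
    Set.mem_ofPred_eq]
  omega

lemma Rset_eq (i : Fin (n + 1)) :
    (hE.toDecomp hn).Rset i = {v | i < E.idxOf (.introduce v)} := by
  ext v
  simp [RootedTreeDecomp.Rset, subVerts_eq]

lemma mem_children_iff {i j : Fin (n + 1)} :
    j ∈ (hE.toDecomp hn).children i ↔ (j : ℕ) + 1 = i := by
  simp only [RootedTreeDecomp.children, toDecomp, pathParent, Set.mem_ofPred_eq, ne_eq,
    Fin.ext_iff, Fin.val_last]
  omega
lemma mem_bag_succ_iff {j : ℕ} (hj : j + 1 < n + 1) {w : V}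
    (hi : E[j + 1] ≠ .introduce w) (hf : E[j + 1] ≠ .forget w) :
    w ∈ (hE.toDecomp hn).bag ⟨j + 1, hj⟩ ↔ w ∈ (hE.toDecomp hn).bag ⟨j, by omega⟩ := by
  have hi' := (hE.nodup.idxOf_eq_iff (by omega)).not.2 hi
  have hf' := (hE.nodup.idxOf_eq_iff (by omega)).not.2 hf
  simp only [mem_bag_iff]
  omega

lemma children_zero : (hE.toDecomp hn).children ⟨0, by omega⟩ = ∅ :=
  Set.eq_empty_of_forall_notMem fun _ hj => by simpa using (hE.mem_children_iff hn).1 hj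

lemma children_succ {j : ℕ} (hj : j + 1 < n + 1) :
    (hE.toDecomp hn).children ⟨j + 1, hj⟩ = {⟨j, by omega⟩} := by
  ext k
  simp [mem_children_iff, Fin.ext_iff]

lemma bag_zero {u : V} (hu : E[0]'(by omega) = .introduce u) :
    (hE.toDecomp hn).bag ⟨0, by omega⟩ = {u} := by
  ext w
  have hidx := hE.nodup.idxOf_eq_iff (a := .introduce w) (show 0 < E.length by omega)
  have := hE.introduce_lt_forget w
  rw [mem_bag_iff, Finset.mem_singleton, Fin.val_mk, Nat.le_zero, hidx, hu,
    TDOp.introduce.injEq, eq_comm]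
  exact ⟨And.left, fun h => ⟨h, by omega⟩⟩

lemma bag_succ_of_introduce [DecidableEq V] {j : ℕ} (hj : j + 1 < n + 1) {u : V}
    (hu : E[j + 1] = .introduce u) :
    u ∉ (hE.toDecomp hn).bag ⟨j, by omega⟩ ∧
      (hE.toDecomp hn).bag ⟨j + 1, hj⟩ = insert u ((hE.toDecomp hn).bag ⟨j, by omega⟩) := by
  have hA := (hE.nodup.idxOf_eq_iff (show j + 1 < E.length by omega)).2 hu
  have := hE.introduce_lt_forget u
  refine ⟨by simp only [mem_bag_iff]; omega, Finset.ext fun w => ?_⟩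
  rw [Finset.mem_insert]
  by_cases hw : w = u
  · subst hw
    simp only [mem_bag_iff, true_or, iff_true]
    omega
  · rw [mem_bag_succ_iff hE hn hj (by simp [hu, Ne.symm hw]) (by simp [hu])]
    simp [hw]

lemma bag_succ_of_forget [DecidableEq V] {j : ℕ} (hj : j + 1 < n + 1) {u : V}
    (hu : E[j + 1] = .forget u) :
    u ∈ (hE.toDecomp hn).bag ⟨j, by omega⟩ ∧
      (hE.toDecomp hn).bag ⟨j + 1, hj⟩ = ((hE.toDecomp hn).bag ⟨j, by omega⟩).erase u := by
  have hB := (hE.nodup.idxOf_eq_iff (show j + 1 < E.length by omega)).2 hu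
  have := hE.introduce_lt_forget u
  refine ⟨by simp only [mem_bag_iff]; omega, Finset.ext fun w => ?_⟩
  rw [Finset.mem_erase]
  by_cases hw : w = u
  · subst hw
    simp only [mem_bag_iff, ne_eq, not_true_eq_false, false_and, iff_false]
    omega
  · rw [mem_bag_succ_iff hE hn hj (by simp [hu]) (by simp [hu, Ne.symm hw])]
    simp [hw]

lemma hasOp_getElem [DecidableEq V] (C : Set V) (i : ℕ) (hi : i < n + 1) :
    (hE.toDecomp hn).HasOp C ⟨i, hi⟩ E[i] := by
  obtain ⟨u, hu | hu⟩ := hE.exists_vertex _ (List.getElem_mem (show i < E.length by omega))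
  all_goals rw [hu]
  · cases i with
    | zero => exact Or.inl ⟨hE.children_zero hn, hE.bag_zero hn hu⟩
    | succ j => exact Or.inr ⟨_, hE.children_succ hn hi, hE.bag_succ_of_introduce hn hi hu⟩
  · cases i with
    | zero =>
      -- `forget u` cannot come first, as it follows `introduce u`.
      have := (hE.nodup.idxOf_eq_iff (show 0 < E.length by omega)).2 hu
      have := hE.introduce_lt_forget u
      omega
    | succ j => exact ⟨_, hE.children_succ hn hi, hE.bag_succ_of_forget hn hi hu⟩

lemma isNicePath [DecidableEq V] : (hE.toDecomp hn).IsNicePath := by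
  refine (hE.toDecomp hn).isNicePath_of_hasOp ∅ fun ⟨i, hi⟩ => ?_
  obtain ⟨u, hu | hu⟩ := hE.exists_vertex _ (List.getElem_mem (show i < E.length by omega))
  · exact ⟨u, Or.inl (hu ▸ hE.hasOp_getElem hn ∅ i hi)⟩
  · exact ⟨u, Or.inr (hu ▸ hE.hasOp_getElem hn ∅ i hi)⟩

lemma respectsAtND [DecidableEq V] (C : Set V) (Q : TDQuint V) (k : ℕ) (hk : k < n)
    (hL : E[k] = Q.tauL) (hR : E[k + 1] = Q.tauR)
    (htrace : (hE.toDecomp hn).HasTrace C ⟨k, by omega⟩ Q.LC Q.XC Q.RC)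
    (hLC : (∃ u, Q.tauL = .introduce u ∧ u ∈ Q.XC) ∨ (∃ u, Q.tauL = .forget u ∧ u ∈ Q.LC))
    (hRC : (∃ v, Q.tauR = .introduce v ∧ v ∈ Q.RC) ∨ (∃ v, Q.tauR = .forget v ∧ v ∈ Q.XC)) :
    RespectsAtND (hE.toDecomp hn) C Q ⟨k, by omega⟩ ⟨k, by omega⟩ := by
  have hidx := fun (j : ℕ) (hj : j < n + 1) (e : TDOp V) =>
    hE.nodup.idxOf_eq_iff (a := e) (show j < E.length by omega)
  refine ⟨htrace, htrace, ⟨0, rfl⟩, fun i ⟨hLi, hXi, hRi⟩ => ?_, hL ▸ hE.hasOp_getElem hn C k _,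
    Or.inr ⟨fun h => by simp [toDecomp, Fin.ext_iff] at h; omega, ?_⟩⟩
  · simp only [anc_iff]
    constructor
    · rcases hLC with ⟨u, hu, huX⟩ | ⟨u, hu, huL⟩
      · rw [hXi, Set.mem_inter_iff, Finset.mem_coe, mem_bag_iff] at huX
        have := (hidx k (by omega) _).2 (hL.trans hu)
        omega
      · rw [hLi, Set.mem_inter_iff, Lset_eq] at huL
        have := (hidx k (by omega) _).2 (hL.trans hu)
        simp only [Set.mem_ofPred_eq] at huL
        omega
    · rcases hRC with ⟨v, hv, hvR⟩ | ⟨v, hv, hvX⟩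
      · rw [hRi, Set.mem_inter_iff, Rset_eq] at hvR
        have := (hidx (k + 1) (by omega) _).2 (hR.trans hv)
        simp only [Set.mem_ofPred_eq] at hvR
        omega
      · rw [hXi, Set.mem_inter_iff, Finset.mem_coe, mem_bag_iff] at hvX
        have := (hidx (k + 1) (by omega) _).2 (hR.trans hv)
        omega
  · have hpar : (hE.toDecomp hn).parent ⟨k, by omega⟩ = ⟨k + 1, by omega⟩ := by
      simp only [toDecomp, pathParent, Fin.ext_iff]
      omega
    rw [hpar, ← hR]
    exact hE.hasOp_getElem hn C (k + 1) _

end IsEventSeq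

noncomputable section Construction

variable {V : Type} [Fintype V] (LC RC : Set V) (τl τr : TDOp V)

def introduceBelow : List (TDOp V) :=
  {v | v ∉ RC ∧ TDOp.introduce v ≠ τl}.toFinset.toList.map .introduce

def forgetBelow : List (TDOp V) :=
  {v | v ∈ LC ∧ TDOp.forget v ≠ τl}.toFinset.toList.map .forget

def introduceAbove : List (TDOp V) :=
  {v | v ∈ RC ∧ TDOp.introduce v ≠ τr}.toFinset.toList.map .introduce

def eventsBelow : List (TDOp V) := introduceBelow RC τl ++ forgetBelow LC τl ++ [τl]

def eventsAbove : List (TDOp V) := τr :: introduceAbove RC τr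

variable {LC RC τl τr}

lemma introduce_mem_introduceBelow_iff {v : V} :
    .introduce v ∈ introduceBelow RC τl ↔ v ∉ RC ∧ .introduce v ≠ τl := by
  simp [introduceBelow]

lemma forget_notMem_introduceBelow {v : V} : .forget v ∉ introduceBelow RC τl := by
  simp [introduceBelow]

variable (LC) in
lemma introduceBelow_prefix_eventsBelow : introduceBelow RC τl <+: eventsBelow LC RC τl :=
  ⟨_, (List.append_assoc _ _ _).symm⟩

lemma mem_eventsBelow_iff {e : TDOp V} : e ∈ eventsBelow LC RC τl ↔
    e = τl ∨ (∃ v, e = .introduce v ∧ v ∉ RC) ∨ ∃ v, e = .forget v ∧ v ∈ LC := by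
  simp only [eventsBelow, introduceBelow, forgetBelow, List.mem_append, List.mem_map,
    Finset.mem_toList, Set.mem_toFinset, Set.mem_ofPred_eq, List.mem_singleton]
  grind

lemma mem_eventsAbove_iff {e : TDOp V} :
    e ∈ eventsAbove RC τr ↔ e = τr ∨ ∃ v, e = .introduce v ∧ v ∈ RC := by
  simp only [eventsAbove, introduceAbove, List.mem_cons, List.mem_map, Finset.mem_toList,
    Set.mem_toFinset, Set.mem_ofPred_eq]
  grind

lemma nodup_eventsBelow : (eventsBelow LC RC τl).Nodup := by
  have hinj : Function.Injective (TDOp.introduce : V → TDOp V) := fun _ _ => TDOp.introduce.inj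
  have hinj' : Function.Injective (TDOp.forget : V → TDOp V) := fun _ _ => TDOp.forget.inj
  simp only [eventsBelow, introduceBelow, forgetBelow, List.nodup_append, List.mem_append,
    List.mem_map, Finset.mem_toList, Set.mem_toFinset, Set.mem_ofPred_eq, List.mem_singleton]
  refine ⟨⟨(Finset.nodup_toList _).map hinj, (Finset.nodup_toList _).map hinj', ?_⟩,
    List.nodup_singleton _, ?_⟩
  · grind
  · grind

lemma nodup_eventsAbove : (eventsAbove RC τr).Nodup := by
  simp only [eventsAbove, introduceAbove, List.nodup_cons, List.mem_map, Finset.mem_toList,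
    Set.mem_toFinset, Set.mem_ofPred_eq]
  exact ⟨by grind, (Finset.nodup_toList _).map fun _ _ => TDOp.introduce.inj⟩

lemma forget_mem_eventsAbove_iff {v : V} : .forget v ∈ eventsAbove RC τr ↔ .forget v = τr := by
  simp [mem_eventsAbove_iff]

variable (LC RC τl τr) in
lemma exists_eventsBelow_append_eventsAbove_eq : ∃ pre post : List (TDOp V),
    eventsBelow LC RC τl ++ eventsAbove RC τr = pre ++ τl :: τr :: post ∧
      (eventsBelow LC RC τl).length = pre.length + 1 :=
  ⟨introduceBelow RC τl ++ forgetBelow LC τl, introduceAbove RC τr,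
    by simp [eventsBelow, eventsAbove], by simp [eventsBelow, Nat.add_assoc]⟩

variable {G : SimpleGraph V} {C XC : Set V}
  (hP : IsSeparatedPartition G C LC XC RC)
  (hL : (∃ u, τl = .introduce u ∧ u ∈ XC ∧ G.neighborSet u ∩ LC = ∅) ∨
    (∃ u, τl = .forget u ∧ u ∈ LC))
  (hR : (∃ v, τr = .introduce v ∧ v ∈ RC) ∨
    (∃ v, τr = .forget v ∧ v ∈ XC ∧ G.neighborSet v ∩ RC = ∅))

include hP hL in
lemma introduce_mem_eventsBelow_iff {v : V} :
    .introduce v ∈ eventsBelow LC RC τl ↔ v ∉ RC := by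
  rw [mem_eventsBelow_iff]
  rcases hL with ⟨u, rfl, huX, -⟩ | ⟨u, rfl, -⟩
  · have := ((hP.mem_mid_iff u).1 huX).2.2
    simp only [TDOp.introduce.injEq, reduceCtorEq, false_and, exists_false, or_false]
    grind
  · simp

include hL in
lemma forget_mem_eventsBelow_iff {v : V} : .forget v ∈ eventsBelow LC RC τl ↔ v ∈ LC := by
  rw [mem_eventsBelow_iff]
  rcases hL with ⟨u, rfl, -⟩ | ⟨u, rfl, huL⟩ <;> grind

include hR in
lemma introduce_mem_eventsAbove_iff {v : V} : .introduce v ∈ eventsAbove RC τr ↔ v ∈ RC := by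
  rw [mem_eventsAbove_iff]
  rcases hR with ⟨u, rfl, huR⟩ | ⟨u, rfl, -⟩ <;> grind

include hP hL in
lemma idxOf_introduce_lt_idxOf_forget {a b : V} (ha : a ∉ RC)
    (h : .introduce a ≠ τl ∨ .forget b ∉ eventsBelow LC RC τl) :
    (eventsBelow LC RC τl ++ eventsAbove RC τr).idxOf (.introduce a) <
      (eventsBelow LC RC τl ++ eventsAbove RC τr).idxOf (.forget b) := by
  rcases h with h | h
  · refine List.idxOf_lt_idxOf_of_isPrefix
      ((introduceBelow_prefix_eventsBelow LC).trans (List.prefix_append _ _))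
      (introduce_mem_introduceBelow_iff.2 ⟨ha, h⟩) forget_notMem_introduceBelow
  · exact List.idxOf_lt_idxOf_of_isPrefix (List.prefix_append _ _)
      ((introduce_mem_eventsBelow_iff hP hL).2 ha) h

include hP hL hR in
lemma nodup_eventsBelow_append_eventsAbove :
    (eventsBelow LC RC τl ++ eventsAbove RC τr).Nodup := by
  refine List.nodup_append.2 ⟨nodup_eventsBelow, nodup_eventsAbove, ?_⟩
  rintro e he _ he' rfl
  rcases mem_eventsAbove_iff.1 he' with rfl | ⟨v, rfl, hv⟩
  · rcases hR with ⟨v, rfl, hv⟩ | ⟨v, rfl, hv, -⟩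
    · exact (introduce_mem_eventsBelow_iff hP hL).1 he hv
    · exact ((hP.mem_mid_iff v).1 hv).2.1 ((forget_mem_eventsBelow_iff hL).1 he)
  · exact (introduce_mem_eventsBelow_iff hP hL).1 he hv

include hP hL hR in
lemma introduce_mem_eventsBelow_append_eventsAbove (v : V) :
    .introduce v ∈ eventsBelow LC RC τl ++ eventsAbove RC τr := by
  by_cases hv : v ∈ RC
  · exact List.mem_append_right _ ((introduce_mem_eventsAbove_iff hR).2 hv)
  · exact List.mem_append_left _ ((introduce_mem_eventsBelow_iff hP hL).2 hv)

include hP hL hR in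
theorem isEventSeq_eventsBelow_append_eventsAbove :
    IsEventSeq G (eventsBelow LC RC τl ++ eventsAbove RC τr) where
  nodup := nodup_eventsBelow_append_eventsAbove hP hL hR
  exists_vertex e he := by
    rcases List.mem_append.1 he with he | he
    · rcases mem_eventsBelow_iff.1 he with rfl | ⟨v, rfl, -⟩ | ⟨v, rfl, -⟩
      · rcases hL with ⟨v, rfl, -⟩ | ⟨v, rfl, -⟩ <;> exact ⟨v, by simp⟩
      all_goals exact ⟨v, by simp⟩
    · rcases mem_eventsAbove_iff.1 he with rfl | ⟨v, rfl, -⟩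
      · rcases hR with ⟨v, rfl, -⟩ | ⟨v, rfl, -⟩ <;> exact ⟨v, by simp⟩
      · exact ⟨v, by simp⟩
  introduce_mem := introduce_mem_eventsBelow_append_eventsAbove hP hL hR
  introduce_lt_forget v := by
    by_cases hvR : v ∈ RC
    · refine List.idxOf_lt_idxOf_of_notMem
        (introduce_mem_eventsBelow_append_eventsAbove hP hL hR v) ?_
      rw [List.mem_append, forget_mem_eventsBelow_iff hL, forget_mem_eventsAbove_iff]
      rintro (hvL | rfl)
      · exact hP.notMem_right_of_mem_left v hvL hvR
      · rcases hR with ⟨_, h, -⟩ | ⟨_, h, hvX, -⟩ <;> cases h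
        exact ((hP.mem_mid_iff v).1 hvX).2.2 hvR
    refine idxOf_introduce_lt_idxOf_forget hP hL hvR ?_
    by_cases hvL : v ∈ LC
    · refine Or.inl fun h => ?_
      rcases hL with ⟨_, h', huX, -⟩ | ⟨_, h', -⟩ <;> rw [h'] at h <;> cases h
      exact ((hP.mem_mid_iff v).1 huX).2.1 hvL
    · exact Or.inr ((forget_mem_eventsBelow_iff hL).not.2 hvL)
  introduce_lt_forget_of_adj a b hab := by
    by_cases hb : .forget b ∈ eventsBelow LC RC τl ++ eventsAbove RC τr
    swap
    · exact List.idxOf_lt_idxOf_of_notMem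
        (introduce_mem_eventsBelow_append_eventsAbove hP hL hR a) hb
    rw [List.mem_append, forget_mem_eventsBelow_iff hL, forget_mem_eventsAbove_iff] at hb
    rcases hb with hbL | rfl
    · refine idxOf_introduce_lt_idxOf_forget hP hL (fun haR => hP.not_adj b hbL a haR hab.symm)
        (Or.inl fun h => ?_)
      rcases hL with ⟨_, h', -, hN⟩ | ⟨_, h', -⟩ <;> rw [h'] at h <;> cases h
      exact (Set.eq_empty_iff_forall_notMem.1 hN) b ⟨hab, hbL⟩
    · rcases hR with ⟨_, h, -⟩ | ⟨_, h, hbX, hN⟩ <;> cases h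
      refine idxOf_introduce_lt_idxOf_forget hP hL
        (fun haR => (Set.eq_empty_iff_forall_notMem.1 hN) a ⟨hab.symm, haR⟩)
        (Or.inr ((forget_mem_eventsBelow_iff hL).not.2 ((hP.mem_mid_iff b).1 hbX).2.1))

include hP hL hR in
lemma hasTrace_eventsBelow {n k : ℕ}
    (hn : (eventsBelow LC RC τl ++ eventsAbove RC τr).length = n + 1)
    (hk : k + 1 = (eventsBelow LC RC τl).length) (hkn : k < n + 1) :
    ((isEventSeq_eventsBelow_append_eventsAbove hP hL hR).toDecomp hn).HasTrace C ⟨k, hkn⟩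
      LC XC RC := by
  have hbelow (e : TDOp V) : e ∈ eventsBelow LC RC τl ↔
      (eventsBelow LC RC τl ++ eventsAbove RC τr).idxOf e ≤ k := by
    rw [(List.prefix_append _ (eventsAbove RC τr)).mem_iff_idxOf_lt_length]
    omega
  refine ⟨?_, ?_, ?_⟩ <;> ext v
  · rw [IsEventSeq.Lset_eq, Set.mem_inter_iff, Set.mem_ofPred_eq, ← hbelow,
      forget_mem_eventsBelow_iff hL]
    exact ⟨fun h => ⟨h, hP.left_subset h⟩, And.left⟩
  · rw [Set.mem_inter_iff, Finset.mem_coe, IsEventSeq.mem_bag_iff, hP.mem_mid_iff]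
    simp only [← hbelow, introduce_mem_eventsBelow_iff hP hL, forget_mem_eventsBelow_iff hL,
      ← not_le]
    tauto
  · rw [IsEventSeq.Rset_eq, Set.mem_inter_iff, Set.mem_ofPred_eq, ← not_le, ← hbelow,
      introduce_mem_eventsBelow_iff hP hL, not_not]
    exact ⟨fun h => ⟨h, hP.right_subset h⟩, And.left⟩

end Construction

theorem validQuintP_of_conditions_general {V : Type} [Fintype V] [DecidableEq V]
    (G : SimpleGraph V) (C : Set V)
    (Q : TDQuint V) (hvp : ValidPartition G C Q.LC Q.XC Q.RC)
    (hL : (∃ u, Q.tauL = TDOp.introduce u ∧ u ∈ Q.XC ∧ G.neighborSet u ∩ Q.LC = ∅) ∨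
      (∃ u, Q.tauL = TDOp.forget u ∧ u ∈ Q.LC))
    (hR : (∃ v, Q.tauR = TDOp.introduce v ∧ v ∈ Q.RC) ∨
      (∃ v, Q.tauR = TDOp.forget v ∧ v ∈ Q.XC ∧ G.neighborSet v ∩ Q.RC = ∅)) :
    ValidQuintP G C Q := by
  obtain ⟨τl, LC, XC, RC, τr⟩ := Q
  have hP := hvp.isSeparatedPartition
  have hE := isEventSeq_eventsBelow_append_eventsAbove hP hL hR
  obtain ⟨pre, post, hevents, hlen⟩ := exists_eventsBelow_append_eventsAbove_eq LC RC τl τr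
  have hn : (eventsBelow LC RC τl ++ eventsAbove RC τr).length =
      pre.length + post.length + 1 + 1 := by
    simp [hevents]
    omega
  refine ⟨_, hE.toDecomp hn, hE.isNicePath hn, _, _, hE.respectsAtND hn C _ pre.length (by omega)
    (by simp [hevents]) (by simp [hevents]) (hasTrace_eventsBelow hP hL hR hn hlen.symm _)
    (hL.imp (fun ⟨u, hu, huX, _⟩ => ⟨u, hu, huX⟩) id)
    (hR.imp id fun ⟨v, hv, hvX, _⟩ => ⟨v, hv, hvX⟩)⟩

theorem validQuintP_of_conditions {V : Type} [Fintype V] [DecidableEq V]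
    (G : SimpleGraph V) (C : Set V) (hC : IsVertexCover G C)
    (Q : TDQuint V) (hvp : ValidPartition G C Q.LC Q.XC Q.RC)
    (hL : (∃ u, Q.tauL = TDOp.introduce u ∧ u ∈ Q.XC ∧ G.neighborSet u ∩ Q.LC = ∅) ∨
      (∃ u, Q.tauL = TDOp.forget u ∧ u ∈ Q.LC))
    (hR : (∃ v, Q.tauR = TDOp.introduce v ∧ v ∈ Q.RC) ∨
      (∃ v, Q.tauR = TDOp.forget v ∧ v ∈ Q.XC ∧ G.neighborSet v ∩ Q.RC = ∅)) :
    ValidQuintP G C Q :=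
  validQuintP_of_conditions_general G C Q hvp hL hR
end
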